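/- In the dual-opinion scalar system with 2/(φ·(h-1)+2) < b < 1, suppose there exists T > 0 such that x̂(φ,h,b) ≤ x(t) < x̂(1,h,b) for all t ≥ T. Then there exists 𝒯 > T such that x and y are each monotone on {t : t ≥ 𝒯}, and lim_{t→∞} x(t) = x̂(φ,h,b) and lim_{t→∞} y(t) = (φ·(h+1)·x̂(φ,h,b) + 1 - φ)/(φ·h + 2 - φ). -/

import Mathlib

open Filter Topology

/-- Aggregate explicit opinion received from the in-group side:
`A(y) = h·y + 1 - y`. -/
noncomputable def A (h y : ℝ) : ℝ := h * y + 1 - y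

/-- Aggregate explicit opinion received from the out-group side:
`B(y) = y + h·(1 - y)`. -/
noncomputable def B (h y : ℝ) : ℝ := y + h * (1 - y)

/-- The function `g(x,b)` of the paper, for `b ∈ (0,1)`:
`g(x,b) = (x^{1-b} - (1-x)^{1-b}) / (x·(1-x)^{1-b} - (1-x)·x^{1-b})` for
`x ∈ (1/2,1)` and `g(1/2,b) = 2/b - 2`. -/
noncomputable def g (x b : ℝ) : ℝ :=
  if x = 1 / 2 then 2 / b - 2
  else (x ^ (1 - b) - (1 - x) ^ (1 - b)) /
    (x * (1 - x) ^ (1 - b) - (1 - x) * x ^ (1 - b))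

/-!
The implicit update `implicitStep` is increasing in both `x` and `y`, and the explicit increments
obey `Δy(t+1) = φ Δx(t+1) + q Δy(t)` with `q = (1-φ)(h-1)/(h+1) ≥ 0`. Hence a step at which `Δx`
and `Δy` have the same sign forces the same signs forever; if no such step occurs after `T`, the
two increments keep opposite signs and `Δy` can never change sign. Either way `x` and `y` are
eventually monotone, hence convergent, and the limit is a fixed point of the system.

Eliminating `y`, the odds `a = x / (1 - x)` of the limit and those of `x̂(φ,h,b)` are both zeros of
`oddsResidual b (φ(h-1))`, which vanishes at `a = 1` and is strictly convex on `[1, ∞)` since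
`b > 2 / (φ(h-1)+2)`; so it has only one zero `a > 1`. The bounds `x̂(φ,h,b) ≤ x(t) < x̂(1,h,b) < 1`
keep the limit in `(1/2, 1)`, i.e. its odds in `(1, ∞)`.
-/

open Set

/-- Zeros `a > 1` of `oddsResidual b K` are the odds `a = x / (1 - x)` of the solutions
`x ∈ (1/2, 1)` of `g x b = K`. -/
noncomputable def oddsResidual (b K a : ℝ) : ℝ := a + (K + 1) - (K + 1) * a ^ b - a ^ (b - 1)

lemma StrictConvexOn.eq_of_apply_eq_apply {D : Set ℝ} {f : ℝ → ℝ} (hf : StrictConvexOn ℝ D f)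
    {a r s : ℝ} (ha : a ∈ D) (hr : r ∈ D) (hs : s ∈ D) (har : a < r) (has : a < s)
    (hfr : f r = f a) (hfs : f s = f a) : r = s := by
  by_contra hne
  rcases lt_or_gt_of_ne hne with hrs | hsr
  · have := hf.slope_strict_mono_adjacent ha hs har hrs
    simp [hfr, hfs] at this
  · have := hf.slope_strict_mono_adjacent ha hr has hsr
    simp [hfr, hfs] at this

section OddsResidual

variable {b K : ℝ}

lemma hasDerivAt_oddsResidual {a : ℝ} (ha : 0 < a) :
    HasDerivAt (oddsResidual b K)
      (1 - (K + 1) * (b * a ^ (b - 1)) - (b - 1) * a ^ (b - 1 - 1)) a := by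
  have h1 := Real.hasDerivAt_rpow_const (p := b) (Or.inl ha.ne')
  have h2 := Real.hasDerivAt_rpow_const (p := b - 1) (Or.inl ha.ne')
  exact (((hasDerivAt_id a).add_const (K + 1)).sub (h1.const_mul (K + 1))).sub h2

lemma oddsResidual_strictConvexOn (hb0 : 0 < b) (hb1 : b < 1) (hC : 2 - b ≤ (K + 1) * b) :
    StrictConvexOn ℝ (Ici 1) (oddsResidual b K) := by
  apply strictConvexOn_of_deriv2_pos (convex_Ici 1)
  · exact fun a ha =>
      (hasDerivAt_oddsResidual (by linarith [mem_Ici.1 ha])).continuousAt.continuousWithinAt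
  rw [interior_Ici]
  intro a (ha : 1 < a)
  have ha0 : 0 < a := by linarith
  have hderiv : deriv (oddsResidual b K) =ᶠ[𝓝 a]
      fun r => 1 - (K + 1) * (b * r ^ (b - 1)) - (b - 1) * r ^ (b - 1 - 1) := by
    filter_upwards [Ioi_mem_nhds ha0] with r hr using (hasDerivAt_oddsResidual hr).deriv
  have h1 := Real.hasDerivAt_rpow_const (p := b - 1) (x := a) (Or.inl ha0.ne')
  have h2 := Real.hasDerivAt_rpow_const (p := b - 1 - 1) (x := a) (Or.inl ha0.ne')
  have hderiv' : HasDerivAt (fun r => 1 - (K + 1) * (b * r ^ (b - 1)) - (b - 1) * r ^ (b - 1 - 1))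
      (0 - (K + 1) * (b * ((b - 1) * a ^ (b - 1 - 1)))
        - (b - 1) * ((b - 1 - 1) * a ^ (b - 1 - 1 - 1))) a :=
    ((hasDerivAt_const a 1).sub ((h1.const_mul b).const_mul (K + 1))).sub (h2.const_mul (b - 1))
  rw [Function.iterate_succ_apply, Function.iterate_one, hderiv.deriv_eq, hderiv'.deriv]
  -- the second derivative is `(1 - b) a ^ (b - 3) ((K + 1) b a - (2 - b))`
  have hpow : a ^ (b - 1 - 1) = a ^ (b - 1 - 1 - 1) * a := by
    rw [← Real.rpow_add_one ha0.ne']; ring_nf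
  have hpos : 0 < (1 - b) * (a ^ (b - 1 - 1 - 1) * ((K + 1) * b * a - (2 - b))) :=
    mul_pos (by linarith) (mul_pos (Real.rpow_pos_of_pos ha0 _) (by nlinarith))
  rw [hpow]
  linarith

lemma oddsResidual_one : oddsResidual b K 1 = 0 := by simp [oddsResidual]

lemma oddsResidual_eq_zero_of_rpow_relation {x : ℝ} (hx0 : 0 < x) (hx1 : x < 1)
    (hR : x ^ b * (1 - x) * (1 + K * x) = (1 - x) ^ b * x * (1 + K * (1 - x))) :
    oddsResidual b K (x / (1 - x)) = 0 := by
  have h1x : 0 < 1 - x := by linarith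
  rw [oddsResidual, Real.rpow_sub (div_pos hx0 h1x), Real.rpow_one,
    Real.div_rpow hx0.le h1x.le]
  field_simp
  linear_combination -hR

end OddsResidual

lemma rpow_relation_of_g_eq {b K x : ℝ} (hb : 0 < b) (hx : x ∈ Ioo (1 / 2 : ℝ) 1)
    (hg : g x b = K) :
    x ^ b * (1 - x) * (1 + K * x) = (1 - x) ^ b * x * (1 + K * (1 - x)) := by
  obtain ⟨hx1, hx2⟩ := hx
  have hx0 : 0 < x := by linarith
  have h1x : 0 < 1 - x := by linarith
  have hs := Real.rpow_pos_of_pos hx0 b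
  have hu := Real.rpow_pos_of_pos h1x b
  have hus : (1 - x) ^ b < x ^ b := Real.rpow_lt_rpow h1x.le (by linarith) hb
  rw [g, if_neg (by linarith), Real.rpow_sub hx0, Real.rpow_sub h1x, Real.rpow_one,
    Real.rpow_one] at hg
  have hden : x * ((1 - x) / (1 - x) ^ b) - (1 - x) * (x / x ^ b) ≠ 0 := by
    have : x * ((1 - x) / (1 - x) ^ b) - (1 - x) * (x / x ^ b)
        = x * (1 - x) * (x ^ b - (1 - x) ^ b) / ((1 - x) ^ b * x ^ b) := by
      field_simp
    rw [this]
    exact (div_pos (mul_pos (mul_pos hx0 h1x) (by linarith)) (mul_pos hu hs)).ne'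
  rw [div_eq_iff hden] at hg
  field_simp at hg
  linear_combination -hg

lemma eq_of_rpow_relation {b K x x' : ℝ} (hb0 : 0 < b) (hb1 : b < 1) (hC : 2 - b ≤ (K + 1) * b)
    (hx : x ∈ Ioo (1 / 2 : ℝ) 1) (hx' : x' ∈ Ioo (1 / 2 : ℝ) 1)
    (hR : x ^ b * (1 - x) * (1 + K * x) = (1 - x) ^ b * x * (1 + K * (1 - x)))
    (hR' : x' ^ b * (1 - x') * (1 + K * x') = (1 - x') ^ b * x' * (1 + K * (1 - x'))) :
    x = x' := by
  have one_lt_odds : ∀ z ∈ Ioo (1 / 2 : ℝ) 1, 1 < z / (1 - z) := fun z hz =>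
    (one_lt_div (by linarith [hz.2])).2 (by linarith [hz.1])
  have hodds : x / (1 - x) = x' / (1 - x') :=
    (oddsResidual_strictConvexOn hb0 hb1 hC).eq_of_apply_eq_apply self_mem_Ici
      (one_lt_odds x hx).le (one_lt_odds x' hx').le (one_lt_odds x hx) (one_lt_odds x' hx')
      (by rw [oddsResidual_one, oddsResidual_eq_zero_of_rpow_relation (by linarith [hx.1]) hx.2 hR])
      (by rw [oddsResidual_one,
        oddsResidual_eq_zero_of_rpow_relation (by linarith [hx'.1]) hx'.2 hR'])
  rw [div_eq_div_iff (by linarith [hx.2]) (by linarith [hx'.2])] at hodds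
  linarith

section Aggregates

variable {h y : ℝ}

lemma A_pos (hh : 1 ≤ h) (hy : 0 ≤ y) : 0 < A h y := by unfold A; nlinarith

lemma B_pos (hh : 1 ≤ h) (hy : y ≤ 1) : 0 < B h y := by unfold B; nlinarith

lemma A_monotone (hh : 1 ≤ h) : Monotone (A h) := fun y y' hyy' => by unfold A; nlinarith

lemma B_antitone (hh : 1 ≤ h) : Antitone (B h) := fun y y' hyy' => by unfold B; nlinarith

lemma continuous_A (h : ℝ) : Continuous (A h) := by unfold A; fun_prop

lemma continuous_B (h : ℝ) : Continuous (B h) := by unfold B; fun_prop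

end Aggregates

noncomputable def implicitStep (h b x y : ℝ) : ℝ :=
  x ^ b * A h y / (x ^ b * A h y + (1 - x) ^ b * B h y)

section ImplicitStep

variable {h b x x' y y' : ℝ}

lemma implicitStep_eq_inv (hx0 : 0 < x) (hx1 : x < 1) (hA : 0 < A h y) :
    implicitStep h b x y = (1 + ((1 - x) / x) ^ b * (B h y / A h y))⁻¹ := by
  rw [implicitStep, Real.div_rpow (by linarith) hx0.le]
  field_simp

lemma implicitStep_mem_Ioo (hx0 : 0 < x) (hx1 : x < 1) (hA : 0 < A h y) (hB : 0 < B h y) :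
    implicitStep h b x y ∈ Ioo 0 1 := by
  have hs := mul_pos (Real.rpow_pos_of_pos hx0 b) hA
  have hu := mul_pos (Real.rpow_pos_of_pos (sub_pos.2 hx1) b) hB
  exact ⟨div_pos hs (by linarith), (div_lt_one (by linarith)).2 (by linarith)⟩

lemma implicitStep_le_implicitStep (hh : 1 ≤ h) (hb : 0 ≤ b) (hx0 : 0 < x) (hx1' : x' < 1)
    (hy0 : 0 ≤ y) (hy1' : y' ≤ 1) (hxx' : x ≤ x') (hyy' : y ≤ y') :
    implicitStep h b x y ≤ implicitStep h b x' y' := by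
  have hA := A_pos hh hy0
  have hA' := A_pos hh (hy0.trans hyy')
  have hB := B_pos hh (hyy'.trans hy1')
  have hB' := B_pos hh hy1'
  rw [implicitStep_eq_inv hx0 (hxx'.trans_lt hx1') hA,
    implicitStep_eq_inv (hx0.trans_le hxx') hx1' hA']
  have hodds : ((1 - x') / x') ^ b ≤ ((1 - x) / x) ^ b :=
    Real.rpow_le_rpow (div_nonneg (by linarith) (by linarith))
      (div_le_div₀ (by linarith) (by linarith) hx0 hxx') hb
  have hratio : B h y' / A h y' ≤ B h y / A h y :=
    div_le_div₀ hB.le (B_antitone hh hyy') hA (A_monotone hh hyy')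
  have hpos : 0 ≤ ((1 - x') / x') ^ b * (B h y' / A h y') :=
    mul_nonneg (Real.rpow_nonneg (div_nonneg (by linarith) (by linarith)) b) (by positivity)
  refine inv_anti₀ (by linarith) (add_le_add_right ?_ 1)
  exact mul_le_mul hodds hratio (by positivity)
    (Real.rpow_nonneg (div_nonneg (by linarith) hx0.le) b)

lemma continuousAt_implicitStep (hx0 : 0 < x) (hx1 : x < 1) (hA : 0 < A h y) (hB : 0 < B h y) :
    ContinuousAt (fun p : ℝ × ℝ => implicitStep h b p.1 p.2) (x, y) := by
  have hA' := (continuous_A h).continuousAt.comp (continuous_snd.continuousAt (x := (x, y)))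
  have hB' := (continuous_B h).continuousAt.comp (continuous_snd.continuousAt (x := (x, y)))
  have hxb : ContinuousAt (fun p : ℝ × ℝ => p.1 ^ b) (x, y) :=
    continuous_fst.continuousAt.rpow_const (Or.inl hx0.ne')
  have hub : ContinuousAt (fun p : ℝ × ℝ => (1 - p.1) ^ b) (x, y) :=
    (continuous_const.sub continuous_fst).continuousAt.rpow_const (Or.inl (by simp; linarith))
  exact (hxb.mul hA').div ((hxb.mul hA').add (hub.mul hB')) (by positivity)

end ImplicitStep

section Increments

variable {u v : ℕ → ℝ} {φ q : ℝ}

lemma nonneg_of_nonneg_of_increment (hφ : 0 ≤ φ) (hq : 0 ≤ q)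
    (hv : ∀ t, v (t + 1) = φ * u (t + 1) + q * v t)
    (hu : ∀ t, 0 ≤ u t → 0 ≤ v t → 0 ≤ u (t + 1)) {t₀ : ℕ} (hu₀ : 0 ≤ u t₀) (hv₀ : 0 ≤ v t₀) :
    ∀ t, t₀ ≤ t → 0 ≤ u t ∧ 0 ≤ v t := by
  intro t ht
  induction t, ht using Nat.le_induction with
  | base => exact ⟨hu₀, hv₀⟩
  | succ t _ ih =>
    have hut := hu t ih.1 ih.2
    exact ⟨hut, hv t ▸ add_nonneg (mul_nonneg hφ hut) (mul_nonneg hq ih.2)⟩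

lemma pos_neg_of_alternating (hφ : 0 ≤ φ) (hq : 0 ≤ q)
    (hv : ∀ t, v (t + 1) = φ * u (t + 1) + q * v t) {t₀ : ℕ}
    (halt : ∀ t, t₀ ≤ t → (0 < u t ∧ v t < 0) ∨ (u t < 0 ∧ 0 < v t)) (hv₀ : v t₀ < 0) :
    ∀ t, t₀ ≤ t → 0 < u t ∧ v t < 0 := by
  intro t ht
  induction t, ht using Nat.le_induction with
  | base => exact (halt t₀ le_rfl).resolve_right fun h => h.2.not_gt hv₀
  | succ t ht ih =>
    refine (halt (t + 1) (by omega)).resolve_right fun ⟨hu', hv'⟩ => ?_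
    -- `v` cannot turn positive while `u` turns negative
    have := hv t
    nlinarith [mul_nonpos_of_nonneg_of_nonpos hφ hu'.le, mul_nonpos_of_nonneg_of_nonpos hq ih.2.le]

lemma exists_eventually_sign_constant (hφ : 0 ≤ φ) (hq : 0 ≤ q)
    (hv : ∀ t, v (t + 1) = φ * u (t + 1) + q * v t)
    (hu_nonneg : ∀ t, 0 ≤ u t → 0 ≤ v t → 0 ≤ u (t + 1))
    (hu_nonpos : ∀ t, u t ≤ 0 → v t ≤ 0 → u (t + 1) ≤ 0) (T : ℕ) :
    ∃ 𝒯, T < 𝒯 ∧ ((∀ t, 𝒯 ≤ t → 0 ≤ u t) ∨ (∀ t, 𝒯 ≤ t → u t ≤ 0)) ∧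
      ((∀ t, 𝒯 ≤ t → 0 ≤ v t) ∨ (∀ t, 𝒯 ≤ t → v t ≤ 0)) := by
  have hv_neg : ∀ t, -v (t + 1) = φ * -u (t + 1) + q * -v t := fun t => by rw [hv]; ring
  have hu_neg : ∀ t, 0 ≤ -u t → 0 ≤ -v t → 0 ≤ -u (t + 1) := fun t h h' =>
    neg_nonneg.2 (hu_nonpos t (neg_nonneg.1 h) (neg_nonneg.1 h'))
  by_cases hsame : ∃ t₀, T < t₀ ∧ ((0 ≤ u t₀ ∧ 0 ≤ v t₀) ∨ (u t₀ ≤ 0 ∧ v t₀ ≤ 0))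
  · obtain ⟨t₀, hT, ⟨hu₀, hv₀⟩ | ⟨hu₀, hv₀⟩⟩ := hsame
    · have h := nonneg_of_nonneg_of_increment hφ hq hv hu_nonneg hu₀ hv₀
      exact ⟨t₀, hT, .inl fun t ht => (h t ht).1, .inl fun t ht => (h t ht).2⟩
    · have h := nonneg_of_nonneg_of_increment (u := -u) (v := -v) hφ hq hv_neg hu_neg
        (neg_nonneg.2 hu₀) (neg_nonneg.2 hv₀)
      exact ⟨t₀, hT, .inr fun t ht => neg_nonneg.1 (h t ht).1,
        .inr fun t ht => neg_nonneg.1 (h t ht).2⟩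
  · push Not at hsame
    have halt : ∀ t, T + 1 ≤ t → (0 < u t ∧ v t < 0) ∨ (u t < 0 ∧ 0 < v t) := by
      intro t ht
      obtain ⟨h₁, h₂⟩ := hsame t ht
      rcases lt_trichotomy (u t) 0 with hu | hu | hu
      · exact .inr ⟨hu, h₂ hu.le⟩
      · exact absurd (h₁ hu.ge) (h₂ hu.le).le.not_gt
      · exact .inl ⟨hu, h₁ hu.le⟩
    rcases halt (T + 1) le_rfl with ⟨-, hv₀⟩ | ⟨-, hv₀⟩
    · have h := pos_neg_of_alternating hφ hq hv halt hv₀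
      exact ⟨T + 1, by omega, .inl fun t ht => (h t ht).1.le, .inr fun t ht => (h t ht).2.le⟩
    · have halt_neg : ∀ t, T + 1 ≤ t → (0 < -u t ∧ -v t < 0) ∨ (-u t < 0 ∧ 0 < -v t) :=
        fun t ht => by simpa only [neg_pos, neg_lt_zero, or_comm] using halt t ht
      have h := pos_neg_of_alternating (u := -u) (v := -v) hφ hq hv_neg halt_neg (neg_lt_zero.2 hv₀)
      exact ⟨T + 1, by omega, .inr fun t ht => (neg_pos.1 (h t ht).1).le,
        .inl fun t ht => (neg_lt_zero.1 (h t ht).2).le⟩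

end Increments

lemma exists_tendsto_of_eventually_monotone {x : ℕ → ℝ} {a c : ℝ} {𝒯 : ℕ}
    (hmono : (∀ t, 𝒯 ≤ t → x t ≤ x (t + 1)) ∨ (∀ t, 𝒯 ≤ t → x (t + 1) ≤ x t))
    (hbdd : ∀ t, x t ∈ Icc a c) : ∃ l, Tendsto x atTop (𝓝 l) := by
  suffices ∃ l, Tendsto (fun n => x (n + 𝒯)) atTop (𝓝 l) from
    this.imp fun l => (tendsto_add_atTop_iff_nat 𝒯).1
  rcases hmono with hup | hdown
  · refine ⟨_, tendsto_atTop_ciSup (monotone_nat_of_le_succ fun n => ?_) ⟨c, ?_⟩⟩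
    · simpa only [Nat.add_right_comm n 1] using hup (n + 𝒯) (Nat.le_add_left _ _)
    · rintro _ ⟨n, rfl⟩
      exact (hbdd _).2
  · refine ⟨_, tendsto_atTop_ciInf (antitone_nat_of_succ_le fun n => ?_) ⟨a, ?_⟩⟩
    · simpa only [Nat.add_right_comm n 1] using hdown (n + 𝒯) (Nat.le_add_left _ _)
    · rintro _ ⟨n, rfl⟩
      exact (hbdd _).1

section Orbit

variable {h φ b : ℝ} {x y : ℕ → ℝ}

lemma orbit_mem (hh : 1 ≤ h) (hφ : φ ∈ Icc (0 : ℝ) 1) (hx0 : x 0 ∈ Ioo 0 1)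
    (hy0 : y 0 ∈ Icc 0 1) (hxupd : ∀ t, x (t + 1) = implicitStep h b (x t) (y t))
    (hyupd : ∀ t, y (t + 1) = φ * x (t + 1) + (1 - φ) * (A h (y t) / (h + 1))) :
    ∀ t, x t ∈ Ioo 0 1 ∧ y t ∈ Icc 0 1 := by
  intro t
  induction t with
  | zero => exact ⟨hx0, hy0⟩
  | succ t ih =>
    obtain ⟨⟨hx0, hx1⟩, hy0, hy1⟩ := ih
    have hx' := hxupd t ▸ implicitStep_mem_Ioo hx0 hx1 (A_pos hh hy0) (B_pos hh hy1)
    have hAy : A h (y t) / (h + 1) ∈ Icc 0 1 :=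
      ⟨div_nonneg (A_pos hh hy0).le (by linarith),
        (div_le_one (by linarith)).2 (by unfold A; nlinarith)⟩
    refine ⟨hx', hyupd t ▸ ⟨?_, ?_⟩⟩ <;>
      nlinarith [hφ.1, hφ.2, hx'.1, hx'.2, hAy.1, hAy.2]

lemma explicit_increment_eq
    (hyupd : ∀ t, y (t + 1) = φ * x (t + 1) + (1 - φ) * (A h (y t) / (h + 1))) (t : ℕ) :
    y (t + 1 + 1) - y (t + 1) =
      φ * (x (t + 1 + 1) - x (t + 1)) + (1 - φ) * (h - 1) / (h + 1) * (y (t + 1) - y t) := by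
  rw [hyupd (t + 1), hyupd t]
  unfold A
  ring

lemma orbit_exists_eventually_monotone (hh : 1 ≤ h) (hφ : φ ∈ Icc (0 : ℝ) 1) (hb : 0 ≤ b)
    (hmem : ∀ t, x t ∈ Ioo 0 1 ∧ y t ∈ Icc 0 1)
    (hxupd : ∀ t, x (t + 1) = implicitStep h b (x t) (y t))
    (hyupd : ∀ t, y (t + 1) = φ * x (t + 1) + (1 - φ) * (A h (y t) / (h + 1))) (T : ℕ) :
    ∃ 𝒯, T < 𝒯 ∧
      ((∀ t, 𝒯 ≤ t → x t ≤ x (t + 1)) ∨ (∀ t, 𝒯 ≤ t → x (t + 1) ≤ x t)) ∧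
      ((∀ t, 𝒯 ≤ t → y t ≤ y (t + 1)) ∨ (∀ t, 𝒯 ≤ t → y (t + 1) ≤ y t)) := by
  have hq : 0 ≤ (1 - φ) * (h - 1) / (h + 1) :=
    div_nonneg (mul_nonneg (by linarith [hφ.2]) (by linarith)) (by linarith)
  have hstep : ∀ t, x t ≤ x (t + 1) → y t ≤ y (t + 1) → x (t + 1) ≤ x (t + 1 + 1) :=
    fun t hx hy => by
      simpa only [← hxupd] using implicitStep_le_implicitStep hh hb (hmem t).1.1
        (hmem (t + 1)).1.2 (hmem t).2.1 (hmem (t + 1)).2.2 hx hy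
  have hstep' : ∀ t, x (t + 1) ≤ x t → y (t + 1) ≤ y t → x (t + 1 + 1) ≤ x (t + 1) :=
    fun t hx hy => by
      simpa only [← hxupd] using implicitStep_le_implicitStep hh hb (hmem (t + 1)).1.1
        (hmem t).1.2 (hmem (t + 1)).2.1 (hmem t).2.2 hx hy
  simpa only [sub_nonneg, sub_nonpos] using
    exists_eventually_sign_constant (u := fun t => x (t + 1) - x t)
      (v := fun t => y (t + 1) - y t) hφ.1 hq (explicit_increment_eq hyupd)
      (fun t hx hy => sub_nonneg.2 (hstep t (sub_nonneg.1 hx) (sub_nonneg.1 hy)))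
      (fun t hx hy => sub_nonpos.2 (hstep' t (sub_nonpos.1 hx) (sub_nonpos.1 hy))) T

lemma orbit_limit_isFixedPoint {xl yl : ℝ} (hh : 1 ≤ h)
    (hxupd : ∀ t, x (t + 1) = implicitStep h b (x t) (y t))
    (hyupd : ∀ t, y (t + 1) = φ * x (t + 1) + (1 - φ) * (A h (y t) / (h + 1)))
    (hx : Tendsto x atTop (𝓝 xl)) (hy : Tendsto y atTop (𝓝 yl))
    (hxl : xl ∈ Ioo 0 1) (hyl : yl ∈ Icc 0 1) :
    xl = implicitStep h b xl yl ∧ yl = φ * xl + (1 - φ) * (A h yl / (h + 1)) := by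
  have hx1 := (tendsto_add_atTop_iff_nat 1).2 hx
  have hy1 := (tendsto_add_atTop_iff_nat 1).2 hy
  constructor
  · refine tendsto_nhds_unique (hx1.congr hxupd) ?_
    exact (continuousAt_implicitStep hxl.1 hxl.2 (A_pos hh hyl.1) (B_pos hh hyl.2)).tendsto.comp
      (hx.prodMk_nhds hy)
  · refine tendsto_nhds_unique (hy1.congr hyupd) ?_
    exact (hx1.const_mul φ).add ((((continuous_A h).tendsto yl).comp hy).div_const _ |>.const_mul _)

end Orbit

section FixedPoint

variable {h φ b xl yl : ℝ}

lemma mul_eq_of_explicit_fixedPoint (hh : h + 1 ≠ 0)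
    (hyfix : yl = φ * xl + (1 - φ) * (A h yl / (h + 1))) :
    yl * (φ * (h - 1) + 2) = φ * (h + 1) * xl + 1 - φ := by
  unfold A at hyfix
  field_simp at hyfix
  linear_combination hyfix

lemma rpow_relation_of_fixedPoint (hh : 1 ≤ h) (hxl : xl ∈ Ioo 0 1) (hyl : yl ∈ Icc 0 1)
    (hxfix : xl = implicitStep h b xl yl)
    (hyfix : yl * (φ * (h - 1) + 2) = φ * (h + 1) * xl + 1 - φ) :
    xl ^ b * (1 - xl) * (1 + φ * (h - 1) * xl) =
      (1 - xl) ^ b * xl * (1 + φ * (h - 1) * (1 - xl)) := by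
  have hA := A_pos hh hyl.1
  have hB := B_pos hh hyl.2
  have hs := Real.rpow_pos_of_pos hxl.1 b
  have hu := Real.rpow_pos_of_pos (sub_pos.2 hxl.2) b
  have hcross : (1 - xl) * (xl ^ b * A h yl) = xl * ((1 - xl) ^ b * B h yl) := by
    rw [implicitStep, eq_div_iff (by positivity)] at hxfix
    linear_combination -hxfix
  have hAB : A h yl * (1 + φ * (h - 1) * (1 - xl)) = B h yl * (1 + φ * (h - 1) * xl) := by
    unfold A B
    linear_combination (h - 1) * hyfix
  refine mul_right_cancel₀ hA.ne' ?_
  linear_combination (1 + φ * (h - 1) * xl) * hcross - xl * (1 - xl) ^ b * hAB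

end FixedPoint

theorem stmt_11_general (h φ b : ℝ) (x y : ℕ → ℝ) (xhatφ xhat1 : ℝ)
    (hh : 1 < h) (hφ : 0 < φ ∧ φ < 1)
    (hx0 : 1 / 2 < x 0 ∧ x 0 < 1) (hy0 : 1 / 2 ≤ y 0 ∧ y 0 ≤ x 0)
    (hxupd : ∀ t : ℕ, x (t + 1) =
      (x t) ^ b * A h (y t) / ((x t) ^ b * A h (y t) + (1 - x t) ^ b * B h (y t)))
    (hyupd : ∀ t : ℕ, y (t + 1) = φ * x (t + 1) + (1 - φ) * (A h (y t) / (h + 1)))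
    (hb : 2 / (φ * (h - 1) + 2) < b ∧ b < 1)
    (hxhatφ : xhatφ ∈ Set.Ioo (1 / 2 : ℝ) 1 ∧ g xhatφ b = φ * (h - 1))
    (hxhat1 : xhat1 ∈ Set.Ioo (1 / 2 : ℝ) 1 ∧ g xhat1 b = h - 1)
    (T : ℕ)
    (hbound : ∀ t : ℕ, T ≤ t → xhatφ ≤ x t ∧ x t < xhat1) :
    (∃ 𝒯 : ℕ, T < 𝒯 ∧
      ((∀ t : ℕ, 𝒯 ≤ t → x t ≤ x (t + 1)) ∨ (∀ t : ℕ, 𝒯 ≤ t → x (t + 1) ≤ x t)) ∧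
      ((∀ t : ℕ, 𝒯 ≤ t → y t ≤ y (t + 1)) ∨ (∀ t : ℕ, 𝒯 ≤ t → y (t + 1) ≤ y t))) ∧
    Filter.Tendsto x Filter.atTop (nhds xhatφ) ∧
    Filter.Tendsto y Filter.atTop
      (nhds ((φ * (h + 1) * xhatφ + 1 - φ) / (φ * h + 2 - φ))) := by
  obtain ⟨hφ0, hφ1⟩ := hφ
  obtain ⟨hb2, hb1⟩ := hb
  have hK : 0 < φ * (h - 1) + 2 := by nlinarith
  have hbK : 2 < b * (φ * (h - 1) + 2) := (div_lt_iff₀ hK).1 hb2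
  have hb0 : 0 < b := lt_trans (div_pos two_pos hK) hb2
  have hφ : φ ∈ Icc (0 : ℝ) 1 := ⟨hφ0.le, hφ1.le⟩
  have hmem := orbit_mem hh.le hφ ⟨by linarith, hx0.2⟩ ⟨by linarith, by linarith⟩ hxupd hyupd
  have hmono := orbit_exists_eventually_monotone hh.le hφ hb0.le hmem hxupd hyupd T
  refine ⟨hmono, ?_⟩
  obtain ⟨𝒯, -, hxmono, hymono⟩ := hmono
  obtain ⟨xl, hx⟩ :=
    exists_tendsto_of_eventually_monotone hxmono fun t => Ioo_subset_Icc_self (hmem t).1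
  obtain ⟨yl, hy⟩ := exists_tendsto_of_eventually_monotone hymono fun t => (hmem t).2
  have hxl : xl ∈ Icc xhatφ xhat1 := isClosed_Icc.mem_of_tendsto hx
    (eventually_atTop.2 ⟨T, fun t ht => ⟨(hbound t ht).1, (hbound t ht).2.le⟩⟩)
  have hyl : yl ∈ Icc 0 1 :=
    isClosed_Icc.mem_of_tendsto hy (Eventually.of_forall fun t => (hmem t).2)
  have hxl' : xl ∈ Ioo (1 / 2 : ℝ) 1 := ⟨hxhatφ.1.1.trans_le hxl.1, hxl.2.trans_lt hxhat1.1.2⟩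
  have hxl₀ : xl ∈ Ioo 0 1 := ⟨by linarith [hxl'.1], hxl'.2⟩
  obtain ⟨hxfix, hyfix⟩ := orbit_limit_isFixedPoint hh.le hxupd hyupd hx hy hxl₀ hyl
  have hyfix' := mul_eq_of_explicit_fixedPoint (by linarith) hyfix
  have hxl_eq : xl = xhatφ := eq_of_rpow_relation hb0 hb1 (by linarith) hxl' hxhatφ.1
    (rpow_relation_of_fixedPoint hh.le hxl₀ hyl hxfix hyfix')
    (rpow_relation_of_g_eq hb0 hxhatφ.1 hxhatφ.2)
  have hyl_eq : yl = (φ * (h + 1) * xl + 1 - φ) / (φ * h + 2 - φ) := by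
    rw [eq_div_iff (by linarith)]
    linear_combination hyfix'
  rw [← hxl_eq, ← hyl_eq]
  exact ⟨hx, hy⟩

/-- Lemma 5 of the paper (moderate bias): if the implicit opinion stays in
`[x̂(φ,h,b), x̂(1,h,b))` from some time `T` on, then `x` and `y` are eventually
monotone and converge to `x̂(φ,h,b)` and `(φ(h+1)x̂+1-φ)/(φh+2-φ)`. -/
theorem stmt_11 (h φ b : ℝ) (x y : ℕ → ℝ) (xhatφ xhat1 : ℝ)
    (hh : 1 < h) (hφ : 0 < φ ∧ φ < 1)
    (hx0 : 1 / 2 < x 0 ∧ x 0 < 1) (hy0 : 1 / 2 ≤ y 0 ∧ y 0 ≤ x 0)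
    (hxupd : ∀ t : ℕ, x (t + 1) =
      (x t) ^ b * A h (y t) / ((x t) ^ b * A h (y t) + (1 - x t) ^ b * B h (y t)))
    (hyupd : ∀ t : ℕ, y (t + 1) = φ * x (t + 1) + (1 - φ) * (A h (y t) / (h + 1)))
    (hb : 2 / (φ * (h - 1) + 2) < b ∧ b < 1)
    (hxhatφ : xhatφ ∈ Set.Ioo (1 / 2 : ℝ) 1 ∧ g xhatφ b = φ * (h - 1))
    (hxhat1 : xhat1 ∈ Set.Ioo (1 / 2 : ℝ) 1 ∧ g xhat1 b = h - 1)
    (T : ℕ) (hT : 0 < T)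
    (hbound : ∀ t : ℕ, T ≤ t → xhatφ ≤ x t ∧ x t < xhat1) :
    (∃ 𝒯 : ℕ, T < 𝒯 ∧
      ((∀ t : ℕ, 𝒯 ≤ t → x t ≤ x (t + 1)) ∨ (∀ t : ℕ, 𝒯 ≤ t → x (t + 1) ≤ x t)) ∧
      ((∀ t : ℕ, 𝒯 ≤ t → y t ≤ y (t + 1)) ∨ (∀ t : ℕ, 𝒯 ≤ t → y (t + 1) ≤ y t))) ∧
    Filter.Tendsto x Filter.atTop (nhds xhatφ) ∧
    Filter.Tendsto y Filter.atTop
      (nhds ((φ * (h + 1) * xhatφ + 1 - φ) / (φ * h + 2 - φ))) :=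
  stmt_11_general h φ b x y xhatφ xhat1 hh hφ hx0 hy0 hxupd hyupd hb hxhatφ hxhat1 T hbound
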